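/- Let w be a composition of length m with ex(w) ≥ k+1, and set t = ex(w) − k. Define, for each 1 ≤ i ≤ m, a(i) = max{ s ≥ 1 : the composition 1^{i−1} s 1^{m−i} is contained in some k-deletion of w }. Then a(i) = min{ w(i), t+1 } for all i. -/
import Mathlib


/-- A composition: a word of positive integers. -/
def IsComposition (w : List ℕ) : Prop := ∀ x ∈ w, 1 ≤ x

/-- Containment order on compositions: `u` embeds entrywise into a subword of `w`. -/
def CompLE (u w : List ℕ) : Prop :=
  ∃ v : List ℕ, v.Sublist w ∧ List.Forall₂ (· ≤ ·) u v

/-- The set of `k`-deletions of `w`: compositions `u ≤ w` with `‖u‖ = ‖w‖ - k`. -/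
def kDel (k : ℕ) (w : List ℕ) : Set (List ℕ) :=
  {u | IsComposition u ∧ CompLE u w ∧ u.sum + k = w.sum}

lemma forall2_sum_le {u v : List ℕ} (h : List.Forall₂ (· ≤ ·) u v) : u.sum ≤ v.sum := by
  induction h with
  | nil => simp
  | cons h _ ih => simpa using Nat.add_le_add h ih

lemma forall2_replicate_one {l : List ℕ} (h : ∀ x ∈ l, 1 ≤ x) :
    List.Forall₂ (· ≤ ·) (List.replicate l.length 1) l := by
  induction l with
  | nil => simp
  | cons a l ih =>
      simp only [List.length_cons, List.replicate_succ]
      exact List.Forall₂.cons (h a (by simp)) (ih fun x hx => h x (by simp [hx]))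

lemma length_le_sum {l : List ℕ} (h : ∀ x ∈ l, 1 ≤ x) : l.length ≤ l.sum := by
  induction l with
  | nil => simp
  | cons a l ih =>
      simp only [List.length_cons, List.sum_cons]
      have := h a (by simp)
      have := ih fun x hx => h x (by simp [hx])
      omega

lemma exists_reduce (l : List ℕ) (d : ℕ) (hl : ∀ x ∈ l, 1 ≤ x)
    (hd : d + l.length ≤ l.sum) :
    ∃ u : List ℕ, List.Forall₂ (· ≤ ·) u l ∧ (∀ x ∈ u, 1 ≤ x) ∧ u.sum + d = l.sum := by
  induction l generalizing d with
  | nil =>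
      simp at hd
      exact ⟨[], by simp, by simp, by simp [hd]⟩
  | cons a l ih =>
      have ha : 1 ≤ a := hl a (by simp)
      have hl' : ∀ x ∈ l, 1 ≤ x := fun x hx => hl x (by simp [hx])
      have hlen : l.length ≤ l.sum := length_le_sum hl'
      simp only [List.length_cons, List.sum_cons] at hd
      have hmin1 : min d (a - 1) ≤ d := min_le_left _ _
      have hmin2 : min d (a - 1) ≤ a - 1 := min_le_right _ _
      have hmin3 : min d (a - 1) = d ∨ min d (a - 1) = a - 1 := min_choice _ _
      set d₁ := min d (a - 1) with hd₁
      obtain ⟨u, hu1, hu2, hu3⟩ := ih (d - d₁) hl' (by omega)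
      refine ⟨(a - d₁) :: u, List.Forall₂.cons (by omega) hu1, ?_, ?_⟩
      · intro x hx
        rcases List.mem_cons.mp hx with h | h
        · omega
        · exact hu2 x h
      · simp only [List.sum_cons]
        omega

theorem max_probe_entry (k t : ℕ) (w : List ℕ) (hw : IsComposition w)
    (hex : k + 1 ≤ w.sum - w.length) (ht : t = w.sum - w.length - k) :
    ∀ i : Fin w.length,
      IsGreatest
        {s : ℕ | 1 ≤ s ∧ ∃ u ∈ kDel k w,
          CompLE (List.replicate (i : ℕ) 1 ++ s :: List.replicate (w.length - 1 - i) 1) u}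
        (min (w.get i) (t + 1)) := by
  intro i
  obtain ⟨i, hi⟩ := i
  simp only [Fin.val_mk]
  set m := w.length with hm
  set a := w.get ⟨i, hi⟩ with hav
  -- decompose w
  have hdecomp : w = w.take i ++ a :: w.drop (i + 1) := by
    conv_lhs => rw [← List.take_append_drop i w]
    congr 1
    rw [List.drop_eq_getElem_cons hi]
    rfl
  set L := w.take i with hL
  set R := w.drop (i + 1) with hR
  have hLlen : L.length = i := List.length_take_of_le (le_of_lt hi)
  have hRlen : R.length = m - 1 - i := by
    simp [hR, hm]
    omega
  have hLsum : L.length ≤ L.sum := length_le_sum (fun x hx => hw x (by rw [hdecomp]; simp [hx]))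
  have hRsum : R.length ≤ R.sum := length_le_sum (fun x hx => hw x (by rw [hdecomp]; simp [hx]))
  have hwsum : w.sum = L.sum + a + R.sum := by rw [hdecomp]; simp; omega
  have hwlen : m = i + 1 + (m - 1 - i) := by omega
  have ha : 1 ≤ a := hw a (by rw [hdecomp]; simp)
  set s := min a (t + 1) with hs
  -- arithmetic setup
  have hex' : k + 1 + m ≤ w.sum := by omega
  have htt : t + k + m = w.sum := by omega
  constructor
  · -- membership
    refine ⟨by omega, ?_⟩
    set b := a - min k (a - s) with hb
    set d' := k - min k (a - s) with hd'
    have hslack : d' ≤ (L.sum - L.length) + (R.sum - R.length) := by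
      have : L.sum + R.sum = w.sum - a := by omega
      omega
    set dL := min d' (L.sum - L.length) with hdL
    obtain ⟨u₁, hu₁le, hu₁pos, hu₁sum⟩ := exists_reduce L dL
      (fun x hx => hw x (by rw [hdecomp]; simp [hx])) (by omega)
    obtain ⟨u₂, hu₂le, hu₂pos, hu₂sum⟩ := exists_reduce R (d' - dL)
      (fun x hx => hw x (by rw [hdecomp]; simp [hx])) (by omega)
    have hu₁len : u₁.length = i := by rw [List.Forall₂.length_eq hu₁le, hLlen]
    have hu₂len : u₂.length = m - 1 - i := by rw [List.Forall₂.length_eq hu₂le, hRlen]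
    refine ⟨u₁ ++ b :: u₂, ⟨?_, ?_, ?_⟩, ?_⟩
    · intro x hx
      rcases List.mem_append.mp hx with h | h
      · exact hu₁pos x h
      · rcases List.mem_cons.mp h with h | h
        · omega
        · exact hu₂pos x h
    · refine ⟨w, List.Sublist.refl w, ?_⟩
      rw [hdecomp]
      exact List.rel_append hu₁le (List.Forall₂.cons (by omega) hu₂le)
    · simp only [List.sum_append, List.sum_cons]
      omega
    · refine ⟨u₁ ++ b :: u₂, List.Sublist.refl _, ?_⟩
      refine List.rel_append ?_ (List.Forall₂.cons (by omega) ?_)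
      · rw [← hu₁len]; exact forall2_replicate_one hu₁pos
      · rw [← hu₂len]; exact forall2_replicate_one hu₂pos
  · -- upper bound
    rintro s' ⟨hs'1, u, ⟨hucomp, ⟨v', hv'sub, hv'f⟩, husum⟩, ⟨v, hvsub, hvf⟩⟩
    set p := List.replicate i 1 ++ s' :: List.replicate (m - 1 - i) 1 with hp
    have hplen : p.length = m := by simp [hp]; omega
    have hvlen : v.length = m := by rw [← List.Forall₂.length_eq hvf, hplen]
    have huv' : u.length = v'.length := List.Forall₂.length_eq hv'f
    have hv'len : v'.length ≤ m := hv'sub.length_le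
    have hvu : v.length ≤ u.length := hvsub.length_le
    have hvequ : v = u := hvsub.eq_of_length (by omega)
    have hv'w : v' = w := hv'sub.eq_of_length (by omega)
    rw [hvequ] at hvf
    rw [hv'w] at hv'f
    have hsum1 : p.sum ≤ u.sum := forall2_sum_le hvf
    have hpsum : p.sum = i + (s' + (m - 1 - i)) := by simp [hp]
    refine le_min ?_ (by omega)
    have hiu : i < u.length := by omega
    have h1 := hvf.get (show i < p.length by omega) hiu
    have h2 := hv'f.get hiu (show i < w.length by omega)
    have hpi : p.get ⟨i, by omega⟩ = s' := by
      simp only [hp, List.get_eq_getElem]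
      rw [List.getElem_append_right (by simp)]
      simp
    rw [hpi] at h1
    exact le_trans h1 h2
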